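/- Let V be a commutative ring and I an idempotent ideal with Ĩ flat. For a commutative V-algebra A, the V-module Hom_V(Ĩ, A) carries a commutative V-algebra structure, whose multiplication (f·g) is determined via the isomorphism Ĩ ⊗ Ĩ ≅ Ĩ together with the multiplication of A, and whose unit is induced by V → Hom_V(Ĩ, A), v ↦ (x ↦ v·x·1_A). -/
import Mathlib


open TensorProduct

noncomputable section

set_option maxSynthPendingDepth 5
set_option synthInstance.maxHeartbeats 1000000
set_option maxHeartbeats 1000000

variable {V : Type} [CommRing V]

/-- The multiplication map `Ĩ = I ⊗[V] I → V` induced by the inclusion. -/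
def idealMul (I : Ideal V) : (↥I ⊗[V] ↥I) →ₗ[V] V :=
  TensorProduct.lift (((LinearMap.mul V V).comp I.subtype).compl₂ I.subtype)

/-- The multiplication `Ĩ ⊗ Ĩ → Ĩ`, `x ⊗ y ↦ (idealMul y) • x`, realizing the
isomorphism `Ĩ ⊗ Ĩ ≅ Ĩ`. -/
def tildeMul (I : Ideal V) :
    ((↥I ⊗[V] ↥I) ⊗[V] (↥I ⊗[V] ↥I)) →ₗ[V] (↥I ⊗[V] ↥I) :=
  TensorProduct.lift (((LinearMap.lsmul V (↥I ⊗[V] ↥I)).comp (idealMul I)).flip)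

/-- The unit of `Hom_V(Ĩ, A)`: the map `x ↦ (idealMul x) • 1_A`, i.e. the image
of `1 ∈ V` under `v ↦ (x ↦ v·x·1_A)`. -/
def homUnit (I : Ideal V) (A : Type) [CommRing A] [Algebra V A] :
    (↥I ⊗[V] ↥I) →ₗ[V] A :=
  ((LinearMap.lsmul V A).comp (idealMul I)).flip 1

@[simp] lemma idealMul_tmul (I : Ideal V) (a b : ↥I) :
    idealMul I (a ⊗ₜ[V] b) = (a : V) * (b : V) := rfl

@[simp] lemma tildeMul_tmul (I : Ideal V) (x y : ↥I ⊗[V] ↥I) :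
    tildeMul I (x ⊗ₜ[V] y) = idealMul I y • x := rfl

lemma idealMul_mem (I : Ideal V) (c : ↥I ⊗[V] ↥I) : idealMul I c ∈ I := by
  induction c using TensorProduct.induction_on with
  | zero => simp
  | tmul a b => exact I.mul_mem_left _ b.2
  | add x y hx hy => simpa using add_mem hx hy

def mulToI (I : Ideal V) : (↥I ⊗[V] ↥I) →ₗ[V] ↥I :=
  (idealMul I).codRestrict I (idealMul_mem I)

@[simp] lemma mulToI_coe (I : Ideal V) (c : ↥I ⊗[V] ↥I) :
    (mulToI I c : V) = idealMul I c := rfl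

lemma exists_idealMul_eq (I : Ideal V) (hI : I * I = I) (e : V) (he : e ∈ I) :
    ∃ w : ↥I ⊗[V] ↥I, idealMul I w = e := by
  rw [← hI] at he
  refine Submodule.mul_induction_on he (fun m hm n hn => ⟨⟨m, hm⟩ ⊗ₜ ⟨n, hn⟩, rfl⟩) ?_
  rintro x y ⟨w1, h1⟩ ⟨w2, h2⟩
  exact ⟨w1 + w2, by simp [h1, h2]⟩

lemma mulToI_surjective (I : Ideal V) (hI : I * I = I) :
    Function.Surjective (mulToI I) := by
  intro e
  obtain ⟨w, hw⟩ := exists_idealMul_eq I hI e e.2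
  exact ⟨w, Subtype.ext (by simpa using hw)⟩

/-- Key lemma: `g • k = g ⊗ mulToI k`. -/
lemma smul_eq_tmul_mulToI (I : Ideal V) (g : ↥I) (k : ↥I ⊗[V] ↥I) :
    (g : V) • k = g ⊗ₜ[V] mulToI I k := by
  induction k using TensorProduct.induction_on with
  | zero => simp
  | tmul c d =>
    have h1 : (g : V) • (c ⊗ₜ[V] d) = ((g : V) • c) ⊗ₜ[V] d := TensorProduct.smul_tmul' _ _ _
    have h2 : (g : V) • c = (c : V) • g := Subtype.ext (by simp [mul_comm])
    have h3 : (c : V) • d = mulToI I (c ⊗ₜ[V] d) := Subtype.ext (by simp)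
    rw [h1, h2, TensorProduct.smul_tmul, h3]
  | add x y hx hy => rw [smul_add, map_add, tmul_add, hx, hy]

/-- Symmetry of `tildeMul`. -/
lemma tildeMul_comm (I : Ideal V) (x y : ↥I ⊗[V] ↥I) :
    tildeMul I (x ⊗ₜ[V] y) = tildeMul I (y ⊗ₜ[V] x) := by
  simp only [tildeMul_tmul]
  induction x using TensorProduct.induction_on with
  | zero => simp
  | add x1 x2 h1 h2 => rw [smul_add, map_add, add_smul, h1, h2]
  | tmul a b =>
    induction y using TensorProduct.induction_on with
    | zero => simp
    | add y1 y2 h1 h2 => rw [smul_add, map_add, add_smul, h1, h2]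
    | tmul c d =>
      simp only [idealMul_tmul]
      rw [TensorProduct.smul_tmul' ((c:V)*(d:V)) a b, TensorProduct.smul_tmul' ((a:V)*(b:V)) c d]
      have h2 : ((c:V)*(d:V)) • a = ((d:V)*(a:V)) • c := Subtype.ext (by simp; ring)
      rw [h2, TensorProduct.smul_tmul, TensorProduct.smul_tmul]
      congr 1
      exact Subtype.ext (by simp; ring)

lemma tildeMul_assoc' (I : Ideal V) (x y w : ↥I ⊗[V] ↥I) :
    tildeMul I ((tildeMul I (x ⊗ₜ[V] y)) ⊗ₜ[V] w) =
      tildeMul I (x ⊗ₜ[V] (tildeMul I (y ⊗ₜ[V] w))) := by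
  simp [smul_smul, mul_comm]

lemma tildeMul_surjective (I : Ideal V) (hI : I * I = I) :
    Function.Surjective (tildeMul I) := by
  have key : ∀ z, z ∈ LinearMap.range (tildeMul I) := by
    intro z
    induction z using TensorProduct.induction_on with
    | zero => exact zero_mem _
    | add x y hx hy => exact add_mem hx hy
    | tmul a b =>
      obtain ⟨w, hw⟩ := mulToI_surjective I hI b
      rw [← hw]
      clear hw b
      induction w using TensorProduct.induction_on with
      | zero => simp
      | add w1 w2 h1 h2 =>
        rw [map_add, tmul_add]
        exact add_mem h1 h2
      | tmul e f =>
        have h3 : mulToI I (e ⊗ₜ[V] f) = (e : V) • f := Subtype.ext (by simp)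
        rw [h3, tmul_smul]
        obtain ⟨v, hv⟩ := exists_idealMul_eq I hI (e : V) e.2
        exact ⟨(a ⊗ₜ f) ⊗ₜ v, by rw [tildeMul_tmul, hv]⟩
  intro z
  exact (key z).imp fun _ h => h

lemma tmul_ker_eq_zero (I : Ideal V) (hI : I * I = I) (u k : ↥I ⊗[V] ↥I)
    (hk : mulToI I k = 0) : (u ⊗ₜ[V] k : (↥I ⊗[V] ↥I) ⊗[V] (↥I ⊗[V] ↥I)) = 0 := by
  induction u using TensorProduct.induction_on with
  | zero => simp
  | add x y hx hy => rw [add_tmul, hx, hy, add_zero]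
  | tmul a b =>
    obtain ⟨w, hw⟩ := mulToI_surjective I hI b
    rw [← hw]
    clear hw b
    induction w using TensorProduct.induction_on with
    | zero => simp
    | add w1 w2 h1 h2 =>
      rw [map_add, tmul_add, add_tmul, h1, h2, add_zero]
    | tmul e f =>
      have h3 : mulToI I (e ⊗ₜ[V] f) = (e : V) • f := Subtype.ext (by simp)
      rw [h3, tmul_smul, TensorProduct.smul_tmul, smul_eq_tmul_mulToI I e k, hk,
        tmul_zero, tmul_zero]

lemma tildeMul_injective (I : Ideal V) (hI : I * I = I)
    (hflat : Module.Flat V (↥I ⊗[V] ↥I)) :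
    Function.Injective (tildeMul I) := by
  haveI := hflat
  set M := ↥I ⊗[V] ↥I
  have hfactor : ∀ p : M ⊗[V] M,
      tildeMul I p = (TensorProduct.rid V M)
        ((LinearMap.lTensor M I.subtype) ((LinearMap.lTensor M (mulToI I)) p)) := by
    intro p
    induction p using TensorProduct.induction_on with
    | zero => simp
    | add x y hx hy => simp [hx, hy]
    | tmul x y =>
      simp only [LinearMap.lTensor_tmul, TensorProduct.rid_tmul]
      rfl
  have hzero : ∀ z : M ⊗[V] M, tildeMul I z = 0 → z = 0 := by
    intro z hz
    rw [hfactor] at hz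
    have h1 : (LinearMap.lTensor M I.subtype) ((LinearMap.lTensor M (mulToI I)) z) = 0 := by
      have := (TensorProduct.rid V M).injective (a₁ := _) (a₂ := 0) (by simpa using hz)
      simpa using this
    have h2 : (LinearMap.lTensor M (mulToI I)) z = 0 :=
      Module.Flat.lTensor_preserves_injective_linearMap (M := M) I.subtype
        (Submodule.injective_subtype I) (by simpa using h1)
    have hex := lTensor_exact (R := V) M (LinearMap.exact_subtype_ker_map (mulToI I))
      (mulToI_surjective I hI)
    obtain ⟨w, hw⟩ := (hex z).mp h2
    have hzero_map : LinearMap.lTensor M (LinearMap.ker (mulToI I)).subtype = 0 := by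
      apply TensorProduct.ext'
      intro u kk
      simpa using tmul_ker_eq_zero I hI u (kk : M) kk.2
    rw [← hw, hzero_map]
    simp
  intro a b hab
  have : tildeMul I (a - b) = 0 := by rw [map_sub, hab, sub_self]
  exact sub_eq_zero.mp (hzero _ this)
/-- for a commutative `V`-algebra `A`, `Hom_V(Ĩ, A)` carries a
commutative `V`-algebra structure whose multiplication is determined via
`Ĩ ⊗ Ĩ ≅ Ĩ` by `(f·g)(x ⊗ y) = f(x)·g(y)` and whose unit is
`x ↦ 1_V·x·1_A`. -/
theorem hom_tilde_comm_algebra (I : Ideal V) (hI : I * I = I)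
    (hflat : Module.Flat V (↥I ⊗[V] ↥I))
    (A : Type) [CommRing A] [Algebra V A] :
    ∃ mul : ((↥I ⊗[V] ↥I) →ₗ[V] A) →ₗ[V] ((↥I ⊗[V] ↥I) →ₗ[V] A) →ₗ[V]
        ((↥I ⊗[V] ↥I) →ₗ[V] A),
      (∀ f g, mul f g = mul g f) ∧
      (∀ f g h, mul (mul f g) h = mul f (mul g h)) ∧
      (∀ f, mul (homUnit I A) f = f) ∧
      (∀ (f g : (↥I ⊗[V] ↥I) →ₗ[V] A) (x y : ↥I ⊗[V] ↥I),
        mul f g (tildeMul I (x ⊗ₜ[V] y)) = f x * g y) := by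
  classical
  haveI := hflat
  have hbij : Function.Bijective (tildeMul I) :=
    ⟨tildeMul_injective I hI hflat, tildeMul_surjective I hI⟩
  have hsurj := tildeMul_surjective I hI
  let e := LinearEquiv.ofBijective (tildeMul I) hbij
  let mu : ((↥I ⊗[V] ↥I) →ₗ[V] A) →ₗ[V] ((↥I ⊗[V] ↥I) →ₗ[V] A) →ₗ[V]
      ((↥I ⊗[V] ↥I) →ₗ[V] A) :=
    LinearMap.mk₂ V
      (fun f g => LinearMap.mul' V A ∘ₗ TensorProduct.map f g ∘ₗ e.symm.toLinearMap)
      (fun f1 f2 g => by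
        rw [TensorProduct.map_add_left, LinearMap.add_comp, LinearMap.comp_add])
      (fun c f g => by
        rw [TensorProduct.map_smul_left, LinearMap.smul_comp, LinearMap.comp_smul])
      (fun f g1 g2 => by
        rw [TensorProduct.map_add_right, LinearMap.add_comp, LinearMap.comp_add])
      (fun c f g => by
        rw [TensorProduct.map_smul_right, LinearMap.smul_comp, LinearMap.comp_smul])
  have hmu : ∀ (f g : (↥I ⊗[V] ↥I) →ₗ[V] A) (p : (↥I ⊗[V] ↥I) ⊗[V] (↥I ⊗[V] ↥I)),
      mu f g (tildeMul I p) = LinearMap.mul' V A (TensorProduct.map f g p) := by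
    intro f g p
    have h0 : e.symm (tildeMul I p) = p := by
      apply e.injective
      simp [e, LinearEquiv.ofBijective_apply]
    simp only [mu, LinearMap.mk₂_apply, LinearMap.coe_comp, Function.comp_apply,
      LinearEquiv.coe_coe, h0]
  have hP4 : ∀ (f g : (↥I ⊗[V] ↥I) →ₗ[V] A) (x y : ↥I ⊗[V] ↥I),
      mu f g (tildeMul I (x ⊗ₜ[V] y)) = f x * g y := by
    intro f g x y
    rw [hmu]
    simp
  have htc : ∀ x y : ↥I ⊗[V] ↥I,
      (x ⊗ₜ[V] y : (↥I ⊗[V] ↥I) ⊗[V] (↥I ⊗[V] ↥I)) = y ⊗ₜ[V] x :=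
    fun x y => hbij.1 (tildeMul_comm I x y)
  refine ⟨mu, ?_, ?_, ?_, hP4⟩
  · -- commutativity
    intro f g
    apply LinearMap.ext
    intro z
    obtain ⟨p, rfl⟩ := hsurj z
    rw [hmu, hmu]
    induction p using TensorProduct.induction_on with
    | zero => simp
    | add x y hx hy => simp only [map_add, hx, hy]
    | tmul x y =>
      conv_rhs => rw [htc x y]
      simp [mul_comm]
  · -- associativity
    intro f g h
    apply LinearMap.ext
    intro z
    obtain ⟨p, rfl⟩ := hsurj z
    induction p using TensorProduct.induction_on with
    | zero => simp
    | add x y hx hy => simp only [map_add, hx, hy]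
    | tmul u w =>
      rw [hP4, hP4]
      obtain ⟨q, rfl⟩ := hsurj u
      induction q using TensorProduct.induction_on with
      | zero => simp
      | add q1 q2 h1 h2 => simp only [map_add, add_mul, mul_add, h1, h2]
      | tmul x y =>
        rw [hP4]
        have hkey : idealMul I y • (mu g h) w = g y * h w := by
          rw [← map_smul, ← tildeMul_tmul, tildeMul_comm, hP4]
        rw [tildeMul_tmul, map_smul, smul_mul_assoc, ← mul_smul_comm, hkey, ← mul_assoc]
  · -- unit
    intro f
    apply LinearMap.ext
    intro z
    obtain ⟨p, rfl⟩ := hsurj z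
    induction p using TensorProduct.induction_on with
    | zero => simp
    | add x y hx hy => simp only [map_add, hx, hy]
    | tmul x y =>
      rw [hP4]
      have h1 : homUnit I A x = idealMul I x • (1 : A) := rfl
      rw [h1, smul_mul_assoc, one_mul, ← map_smul, ← tildeMul_tmul, tildeMul_comm]

end
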